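/- Let I ⊆ ℝ be an open interval and let T = (T₁,T₂,T₃) : ℝ × I → ℝ³ be a C^∞ map with T₁² + T₂² − T₃² ≡ −1 and T₃(s,t) > 0 everywhere (so T takes values in the upper sheet ℍ² of the hyperboloid), satisfying ∂ₜT = T ∧₋ ∂ₛ²T, where a ∧₋ b := (a₂b₃ − a₃b₂, a₃b₁ − a₁b₃, −(a₁b₂ − a₂b₁)). Define z : ℝ × I → ℂ by z := (T₁ + i T₂)/(1 + T₃). Then |z(s,t)| < 1 for all (s,t), and z satisfies ∂ₜz = i ∂ₛ²z + 2i z̄ (∂ₛz)² / (1 − |z|²) on ℝ × I. -/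

import Mathlib

open MeasureTheory Set Filter Topology

noncomputable section

/-- Hyperbolic cross product `a ∧₋ b` on ℝ³. -/
def wedgeNeg (a b : Fin 3 → ℝ) : Fin 3 → ℝ :=
  ![a 1 * b 2 - a 2 * b 1, a 2 * b 0 - a 0 * b 2, -(a 0 * b 1 - a 1 * b 0)]

/-- Stereographic projection `z = (T₁ + i T₂)/(1 + T₃)`. -/
def stereo (T : ℝ → ℝ → Fin 3 → ℝ) (s t : ℝ) : ℂ :=
  (Complex.ofReal (T s t 0) + Complex.I * Complex.ofReal (T s t 1)) / (1 + Complex.ofReal (T s t 2))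

set_option maxHeartbeats 1000000 in
private lemma key (a0 b0 c0 a1 b1 c1 a2 b2 c2 : ℂ)
    (hd : 1 + c0 ≠ 0) (hc0 : c0 ≠ 0)
    (h0 : a0^2 + b0^2 - c0^2 = -1)
    (h1 : a0*a1 + b0*b1 - c0*c1 = 0)
    (h2 : a1*a1 + a0*a2 + (b1*b1 + b0*b2) - (c1*c1 + c0*c2) = 0) :
    (((b0*c2 - c0*b2) + Complex.I*(c0*a2 - a0*c2)) * (1+c0) - (a0 + Complex.I*b0) * (-(a0*b2 - b0*a2))) / (1+c0)^2
    = Complex.I * ((((a2 + Complex.I*b2)*(1+c0) + (a1+Complex.I*b1)*c1) - ((a1+Complex.I*b1)*c1 + (a0+Complex.I*b0)*c2)) * (1+c0)^2 - ((a1+Complex.I*b1)*(1+c0) - (a0+Complex.I*b0)*c1) * (2*(1+c0)^1*c1)) / ((1+c0)^2)^2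
      + 2 * Complex.I * ((a0 - Complex.I*b0)/(1+c0)) * (((a1+Complex.I*b1)*(1+c0) - (a0+Complex.I*b0)*c1)/(1+c0)^2)^2 / (1 - (c0-1)/(c0+1)) := by
  have hd2 : c0 + 1 ≠ 0 := by rwa [add_comm] at hd
  have hI : Complex.I^2 = -1 := Complex.I_sq
  have hpoly : ((((b0*c2 - c0*b2) + Complex.I*(c0*a2 - a0*c2)) * (1+c0) - (a0 + Complex.I*b0) * (-(a0*b2 - b0*a2)))) * (1+c0)^2
      = Complex.I * ((((a2 + Complex.I*b2)*(1+c0) + (a1+Complex.I*b1)*c1) - ((a1+Complex.I*b1)*c1 + (a0+Complex.I*b0)*c2)) * (1+c0)^2 - ((a1+Complex.I*b1)*(1+c0) - (a0+Complex.I*b0)*c1) * (2*(1+c0)^1*c1))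
        + Complex.I * (a0 - Complex.I*b0) * ((a1+Complex.I*b1)*(1+c0) - (a0+Complex.I*b0)*c1)^2 := by
    apply mul_left_cancel₀ (pow_ne_zero 3 hc0)
    linear_combination ((-1)*c0^3*b2 + (2)*c0^3*b1*c1 + (-3)*c0^4*b2 + (4)*c0^4*b1*c1 + (-3)*c0^5*b2 + (2)*c0^5*b1*c1 + (-1)*c0^6*b2 + (1)*b0*c0^3*c2 + (-2)*b0*c0^3*c1^2 + (-1)*b0*c0^3*b1^2 + (1)*b0*c0^3*b1^2*Complex.I^2 + (2)*b0*c0^3*a1*b1*Complex.I + (1)*b0*c0^3*a1^2 + (2)*b0*c0^4*c2 + (-2)*b0*c0^4*c1^2 + (-2)*b0*c0^4*b1^2 + (2)*b0*c0^4*b1^2*Complex.I^2 + (4)*b0*c0^4*a1*b1*Complex.I + (2)*b0*c0^4*a1^2 + (1)*b0*c0^5*c2 + (-1)*b0*c0^5*b1^2 + (1)*b0*c0^5*b1^2*Complex.I^2 + (2)*b0*c0^5*a1*b1*Complex.I + (1)*b0*c0^5*a1^2 + (2)*b0^2*c0^3*b1*c1 + (-2)*b0^2*c0^3*b1*c1*Complex.I^2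 + (-2)*b0^2*c0^3*a1*c1*Complex.I + (2)*b0^2*c0^4*b1*c1 + (-2)*b0^2*c0^4*b1*c1*Complex.I^2 + (-2)*b0^2*c0^4*a1*c1*Complex.I + (-1)*b0^3*c0^3*c1^2 + (1)*b0^3*c0^3*c1^2*Complex.I^2 + (-1)*a0*c0^3*b1^2*Complex.I + (-2)*a0*c0^3*a1*b1 + (-2)*a0*c0^4*b1^2*Complex.I + (-4)*a0*c0^4*a1*b1 + (-1)*a0*c0^5*b1^2*Complex.I + (-2)*a0*c0^5*a1*b1 + (1)*a0*b0^2*c0^3*c1^2*Complex.I + (2)*a0^2*c0^3*b1*c1 + (2)*a0^2*c0^4*b1*c1 + (-1)*a0^2*b0*c0^3*c1^2) * hI + ((-1)*b0*c0^3 + (-2)*b0*c0^4 + (-1)*b0*c0^5 + (1)*a0*c0^3*Complex.I + (2)*a0*c0^4*Complex.I + (1)*a0*c0^5*Complex.I) * h2 + ((2)*c0^2*b1 + (-2)*c0^2*a1*Complex.I + (4)*c0^3*b1 + (-4)*c0^3*a1*Complex.I + (2)*c0^4*b1 + (-2)*c0^4*a1*Complex.I + (-1)*b0*c0^2*c1 +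 (1)*b0*c0^4*c1 + (-1)*b0^2*c0*b1 + (2)*b0^2*c0^2*b1 + (-2)*b0^2*c0^2*a1*Complex.I + (3)*b0^2*c0^3*b1 + (-2)*b0^2*c0^3*a1*Complex.I + (-1)*b0^3*c0^2*c1 + (-1)*b0^4*c0*b1 + (1)*a0*c0^2*c1*Complex.I + (-1)*a0*c0^4*c1*Complex.I + (1)*a0*b0*c0*b1*Complex.I + (-1)*a0*b0*c0*a1 + (-1)*a0*b0*c0^3*b1*Complex.I + (1)*a0*b0*c0^3*a1 + (1)*a0*b0^2*c0^2*c1*Complex.I + (1)*a0*b0^3*c0*b1*Complex.I + (-1)*a0*b0^3*c0*a1 + (1)*a0^2*c0*a1*Complex.I + (2)*a0^2*c0^2*b1 + (-2)*a0^2*c0^2*a1*Complex.I + (2)*a0^2*c0^3*b1 + (-3)*a0^2*c0^3*a1*Complex.I + (-1)*a0^2*b0*c0^2*c1 + (-1)*a0^2*b0^2*c0*b1 + (1)*a0^2*b0^2*c0*a1*Complex.I + (1)*a0^3*c0^2*c1*Complex.I + (1)*a0^3*b0*c0*b1*Complex.I + (-1)*a0^3*b0*c0*a1 + (1)*a0^4*c0*a1*Complex.I)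 * h1 + ((1)*c0^3*b2 + (-1)*c0^3*a2*Complex.I + (2)*c0^4*b2 + (-2)*c0^4*a2*Complex.I + (1)*c0^5*b2 + (-1)*c0^5*a2*Complex.I + (-2)*b0*c0^2*b1^2 + (2)*b0*c0^2*a1*b1*Complex.I + (-2)*b0*c0^3*b1^2 + (2)*b0*c0^3*a1*b1*Complex.I + (1)*b0^3*c0*b1^2 + (-2)*a0*c0^2*a1*b1 + (2)*a0*c0^2*a1^2*Complex.I + (-2)*a0*c0^3*a1*b1 + (2)*a0*c0^3*a1^2*Complex.I + (-1)*a0*b0^2*c0*b1^2*Complex.I + (2)*a0*b0^2*c0*a1*b1 + (-2)*a0^2*b0*c0*a1*b1*Complex.I + (1)*a0^2*b0*c0*a1^2 + (-1)*a0^3*c0*a1^2*Complex.I) * h0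
  have h1m : 1 - (c0-1)/(c0+1) = 2/(c0+1) := by field_simp; ring
  rw [h1m]
  field_simp
  have hC : ((((1:ℂ) + c0) ^ 2) ^ 2 * ((1 + c0) * ((1 + c0) ^ 2) ^ 2 * 2)) ≠ 0 :=
    mul_ne_zero (pow_ne_zero _ (pow_ne_zero _ hd))
      (mul_ne_zero (mul_ne_zero hd (pow_ne_zero _ (pow_ne_zero _ hd))) two_ne_zero)
  linear_combination (1+c0) * hpoly

set_option maxHeartbeats 1000000 in
theorem stmt15 (I : Set ℝ) (hIopen : IsOpen I) (hIinterval : I.OrdConnected)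
    (T : ℝ → ℝ → Fin 3 → ℝ)
    (hT : ContDiffOn ℝ (⊤ : ℕ∞) (fun p : ℝ × ℝ => T p.1 p.2) (Set.univ ×ˢ I))
    (hhyp : ∀ s : ℝ, ∀ t ∈ I, (T s t 0) ^ 2 + (T s t 1) ^ 2 - (T s t 2) ^ 2 = -1)
    (hT3 : ∀ s : ℝ, ∀ t ∈ I, 0 < T s t 2)
    (hpde : ∀ s : ℝ, ∀ t ∈ I,
      deriv (fun τ => T s τ) t = wedgeNeg (T s t) (deriv (deriv (fun σ => T σ t)) s)) :
    ∀ s : ℝ, ∀ t ∈ I,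
      ‖stereo T s t‖ < 1 ∧
      deriv (fun τ => stereo T s τ) t =
        Complex.I * deriv (deriv (fun σ => stereo T σ t)) s
          + 2 * Complex.I * (starRingEnd ℂ) (stereo T s t)
              * (deriv (fun σ => stereo T σ t) s) ^ 2
              / (1 - Complex.ofReal (‖stereo T s t‖ ^ 2)) := by
  intro s t ht
  have hc0pos : 0 < T s t 2 := hT3 s t ht
  -- smoothness in the s direction (t fixed)
  have hTs : ContDiff ℝ (⊤ : ℕ∞) (fun σ => T σ t) := by
    rw [← contDiffOn_univ]
    exact hT.comp ((contDiff_id.prodMk contDiff_const).contDiffOn (s := univ))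
      (fun x _ => ⟨trivial, ht⟩)
  have hcomp : ∀ i : Fin 3, ContDiff ℝ (⊤ : ℕ∞) (fun σ => T σ t i) := fun i =>
    (ContinuousLinearMap.proj (R := ℝ) (φ := fun _ : Fin 3 => ℝ) i).contDiff.comp hTs
  have hder : ∀ (i : Fin 3) (σ : ℝ),
      HasDerivAt (fun σ' => T σ' t i) (deriv (fun σ' => T σ' t i) σ) σ := fun i σ =>
    (((hcomp i).differentiable (by simp)) σ).hasDerivAt
  have hcomp1 : ∀ i : Fin 3, ContDiff ℝ (⊤ : ℕ∞) (deriv (fun σ => T σ t i)) := fun i =>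
    (contDiff_infty_iff_deriv.mp ((hcomp i).of_le (by simp))).2
  have hder2 : ∀ (i : Fin 3) (σ : ℝ),
      HasDerivAt (deriv (fun σ' => T σ' t i)) (deriv (deriv (fun σ' => T σ' t i)) σ) σ :=
    fun i σ =>
    (((hcomp1 i).differentiable (by simp)) σ).hasDerivAt
  -- denominators never vanish
  have hdne : ∀ σ : ℝ, (1 : ℂ) + (T σ t 2 : ℂ) ≠ 0 := by
    intro σ hcontra
    have h := hT3 σ t ht
    have := congrArg Complex.re hcontra
    simp at this
    linarith
  -- first s-derivative of stereo
  have hzs : ∀ σ : ℝ, HasDerivAt (fun σ' => stereo T σ' t) ((((Complex.ofReal (deriv (fun σ' => T σ' t 0) σ)) + Complex.I * (Complex.ofReal (deriv (fun σ' => T σ' t 1) σ))) * (1 + (Complex.ofReal (T σ t 2))) - ((Complex.ofReal (T σ t 0)) + Complex.I * (Complex.ofReal (T σ t 1))) * (Complex.ofReal (deriv (fun σ' => T σ' t 2) σ))) / (1 + (Complex.ofReal (T σ t 2))) ^ 2) σ := by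
    intro σ
    have h0 := (hder 0 σ).ofReal_comp
    have h1 := ((hder 1 σ).ofReal_comp).const_mul Complex.I
    have h2 := ((hder 2 σ).ofReal_comp).const_add 1
    exact (h0.add h1).div h2 (hdne σ)
  have hds1 : deriv (fun σ' => stereo T σ' t) = fun σ => ((((Complex.ofReal (deriv (fun σ' => T σ' t 0) σ)) + Complex.I * (Complex.ofReal (deriv (fun σ' => T σ' t 1) σ))) * (1 + (Complex.ofReal (T σ t 2))) - ((Complex.ofReal (T σ t 0)) + Complex.I * (Complex.ofReal (T σ t 1))) * (Complex.ofReal (deriv (fun σ' => T σ' t 2) σ))) / (1 + (Complex.ofReal (T σ t 2))) ^ 2) :=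
    funext fun σ => (hzs σ).deriv
  -- second s-derivative of stereo
  have hzss : HasDerivAt (fun σ => ((((Complex.ofReal (deriv (fun σ' => T σ' t 0) σ)) + Complex.I * (Complex.ofReal (deriv (fun σ' => T σ' t 1) σ))) * (1 + (Complex.ofReal (T σ t 2))) - ((Complex.ofReal (T σ t 0)) + Complex.I * (Complex.ofReal (T σ t 1))) * (Complex.ofReal (deriv (fun σ' => T σ' t 2) σ))) / (1 + (Complex.ofReal (T σ t 2))) ^ 2)) ((((((Complex.ofReal (deriv (deriv (fun σ' => T σ' t 0)) s)) + Complex.I * (Complex.ofReal (deriv (deriv (fun σ' => T σ' t 1)) s))) * (1 + (Complex.ofReal (T s t 2))) + ((Complex.ofReal (deriv (fun σ' => T σ' t 0) s)) + Complex.I * (Complex.ofReal (deriv (fun σ' => T σ' t 1) s))) * (Complex.ofReal (deriv (fun σ' => T σ' t 2) s))) - (((Complex.ofReal (deriv (fun σ' => T σ' t 0) s)) + Complex.I * (Complex.ofReal (deriv (fun σ' => T σ' t 1) s))) * (Complex.ofReal (deriv (fun σ' => T σ' t 2) s)) + ((Complex.ofReal (T s t 0)) + Complex.I * (Complex.ofReal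 (T s t 1))) * (Complex.ofReal (deriv (deriv (fun σ' => T σ' t 2)) s)))) * ((1 + (Complex.ofReal (T s t 2))) ^ 2) - (((Complex.ofReal (deriv (fun σ' => T σ' t 0) s)) + Complex.I * (Complex.ofReal (deriv (fun σ' => T σ' t 1) s))) * (1 + (Complex.ofReal (T s t 2))) - ((Complex.ofReal (T s t 0)) + Complex.I * (Complex.ofReal (T s t 1))) * (Complex.ofReal (deriv (fun σ' => T σ' t 2) s))) * ((Complex.ofReal (deriv (fun σ' => T σ' t 2) s)) * (1 + (Complex.ofReal (T s t 2))) + (1 + (Complex.ofReal (T s t 2))) * (Complex.ofReal (deriv (fun σ' => T σ' t 2) s)))) / ((1 + (Complex.ofReal (T s t 2))) ^ 2) ^ 2) s := by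
    have hnum : HasDerivAt (fun σ => (((Complex.ofReal (deriv (fun σ' => T σ' t 0) σ)) + Complex.I * (Complex.ofReal (deriv (fun σ' => T σ' t 1) σ))) * (1 + (Complex.ofReal (T σ t 2))) - ((Complex.ofReal (T σ t 0)) + Complex.I * (Complex.ofReal (T σ t 1))) * (Complex.ofReal (deriv (fun σ' => T σ' t 2) σ)))) (((((Complex.ofReal (deriv (deriv (fun σ' => T σ' t 0)) s)) + Complex.I * (Complex.ofReal (deriv (deriv (fun σ' => T σ' t 1)) s))) * (1 + (Complex.ofReal (T s t 2))) + ((Complex.ofReal (deriv (fun σ' => T σ' t 0) s)) + Complex.I * (Complex.ofReal (deriv (fun σ' => T σ' t 1) s))) * (Complex.ofReal (deriv (fun σ' => T σ' t 2) s))) - (((Complex.ofReal (deriv (fun σ' => T σ' t 0) s)) + Complex.I * (Complex.ofReal (deriv (fun σ' => T σ' t 1) s))) * (Complex.ofReal (deriv (fun σ' => T σ' t 2) s)) + ((Complex.ofReal (T s t 0)) + Complex.I * (Complex.ofReal (T s t 1))) * (Complex.ofReal (deriv (deriv (fun σ' => T σ' t 2)) s))))) s := by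
      have hA := ((hder2 0 s).ofReal_comp.add ((hder2 1 s).ofReal_comp.const_mul Complex.I)).mul
        (((hder 2 s).ofReal_comp).const_add 1)
      have hB := ((hder 0 s).ofReal_comp.add ((hder 1 s).ofReal_comp.const_mul Complex.I)).mul
        ((hder2 2 s).ofReal_comp)
      exact hA.sub hB
    have hd0 : HasDerivAt (fun σ => (1 + Complex.ofReal (T σ t 2))) (Complex.ofReal (deriv (fun σ' => T σ' t 2) s)) s :=
      ((hder 2 s).ofReal_comp).const_add 1
    have hden : HasDerivAt (fun σ => (1 + (Complex.ofReal (T σ t 2))) ^ 2) ((Complex.ofReal (deriv (fun σ' => T σ' t 2) s)) * (1 + (Complex.ofReal (T s t 2))) + (1 + (Complex.ofReal (T s t 2))) * (Complex.ofReal (deriv (fun σ' => T σ' t 2) s))) s := by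
      simpa only [pow_two] using hd0.fun_mul hd0
    exact hnum.div hden (pow_ne_zero 2 (hdne s))
  -- t-derivative of stereo
  have hTt : ContDiffOn ℝ (⊤ : ℕ∞) (fun τ => T s τ) I :=
    hT.comp ((contDiff_const.prodMk contDiff_id).contDiffOn) (fun x hx => ⟨trivial, hx⟩)
  have hTti : ∀ i : Fin 3, DifferentiableAt ℝ (fun τ => T s τ i) t := by
    intro i
    have h1 : ContDiffAt ℝ (⊤ : ℕ∞) (fun τ => T s τ) t := hTt.contDiffAt (hIopen.mem_nhds ht)
    have h2 : ContDiffAt ℝ (⊤ : ℕ∞) (fun τ => T s τ i) t :=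
      ((ContinuousLinearMap.proj (R := ℝ) (φ := fun _ : Fin 3 => ℝ) i).contDiff.contDiffAt).comp t h1
    exact h2.differentiableAt (by simp)
  have hdt : ∀ i : Fin 3, HasDerivAt (fun τ => T s τ i) (deriv (fun τ => T s τ i) t) t :=
    fun i => (hTti i).hasDerivAt
  have hzt : HasDerivAt (fun τ => stereo T s τ) ((((Complex.ofReal ((deriv (fun τ => T s τ 0) t))) + Complex.I * (Complex.ofReal ((deriv (fun τ => T s τ 1) t)))) * (1 + (Complex.ofReal (T s t 2))) - ((Complex.ofReal (T s t 0)) + Complex.I * (Complex.ofReal (T s t 1))) * (Complex.ofReal ((deriv (fun τ => T s τ 2) t)))) / (1 + (Complex.ofReal (T s t 2))) ^ 2) t := by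
    have h0 := (hdt 0).ofReal_comp
    have h1 := ((hdt 1).ofReal_comp).const_mul Complex.I
    have h2 := ((hdt 2).ofReal_comp).const_add 1
    exact (h0.add h1).div h2 (hdne s)
  -- the PDE, componentwise
  have hpi : deriv (fun τ => T s τ) t = fun i => deriv (fun τ => T s τ i) t := deriv_pi hTti
  have hone : ((1:ℕ∞) : WithTop ℕ∞) ≤ ((⊤:ℕ∞) : WithTop ℕ∞) := by
    exact_mod_cast (le_top : (1:ℕ∞) ≤ ⊤)
  have hD2 : ∀ i : Fin 3, deriv (deriv (fun σ => T σ t)) s i = deriv (deriv (fun σ' => T σ' t i)) s := by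
    intro i
    have e1 : deriv (fun σ => T σ t) = fun σ => (fun j => deriv (fun σ' => T σ' t j) σ) :=
      funext fun σ => deriv_pi (fun j => ((hcomp j).differentiable (by simp) σ))
    rw [e1, deriv_pi (fun j => ((hcomp1 j).differentiable (by simp)) s)]
  have hwedge := hpde s t ht
  have hAt : deriv (fun τ => T s τ 0) t =
      T s t 1 * deriv (deriv (fun σ' => T σ' t 2)) s - T s t 2 * deriv (deriv (fun σ' => T σ' t 1)) s := by
    have h := congrFun hwedge 0
    rw [hpi] at h
    simpa [wedgeNeg, hD2 1, hD2 2] using h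
  have hBt : deriv (fun τ => T s τ 1) t =
      T s t 2 * deriv (deriv (fun σ' => T σ' t 0)) s - T s t 0 * deriv (deriv (fun σ' => T σ' t 2)) s := by
    have h := congrFun hwedge 1
    rw [hpi] at h
    simpa [wedgeNeg, hD2 0, hD2 2] using h
  have hCt : deriv (fun τ => T s τ 2) t =
      -(T s t 0 * deriv (deriv (fun σ' => T σ' t 1)) s - T s t 1 * deriv (deriv (fun σ' => T σ' t 0)) s) := by
    have h := congrFun hwedge 2
    rw [hpi] at h
    simpa [wedgeNeg, hD2 0, hD2 1] using h
  -- differentiated hyperboloid constraints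
  have hg1 : ∀ σ : ℝ, T σ t 0 * deriv (fun σ' => T σ' t 0) σ + T σ t 1 * deriv (fun σ' => T σ' t 1) σ
      - T σ t 2 * deriv (fun σ' => T σ' t 2) σ = 0 := by
    intro σ
    have hconst : (fun σ' => T σ' t 0 * T σ' t 0 + T σ' t 1 * T σ' t 1 - T σ' t 2 * T σ' t 2) = fun _ => (-1 : ℝ) := by
      funext σ'
      linear_combination hhyp σ' t ht
    have hd1 : HasDerivAt (fun σ' => T σ' t 0 * T σ' t 0 + T σ' t 1 * T σ' t 1 - T σ' t 2 * T σ' t 2)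
        ((deriv (fun σ' => T σ' t 0) σ * T σ t 0 + T σ t 0 * deriv (fun σ' => T σ' t 0) σ)
          + (deriv (fun σ' => T σ' t 1) σ * T σ t 1 + T σ t 1 * deriv (fun σ' => T σ' t 1) σ)
          - (deriv (fun σ' => T σ' t 2) σ * T σ t 2 + T σ t 2 * deriv (fun σ' => T σ' t 2) σ)) σ :=
      (((hder 0 σ).mul (hder 0 σ)).add ((hder 1 σ).mul (hder 1 σ))).sub ((hder 2 σ).mul (hder 2 σ))
    have h0 : deriv (fun σ' => T σ' t 0 * T σ' t 0 + T σ' t 1 * T σ' t 1 - T σ' t 2 * T σ' t 2) σ = 0 := by rw [hconst]; exact deriv_const σ (-1)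
    have h1 := hd1.deriv
    rw [h0] at h1
    linarith
  have hg2 : deriv (fun σ' => T σ' t 0) s * deriv (fun σ' => T σ' t 0) s + T s t 0 * deriv (deriv (fun σ' => T σ' t 0)) s
      + (deriv (fun σ' => T σ' t 1) s * deriv (fun σ' => T σ' t 1) s + T s t 1 * deriv (deriv (fun σ' => T σ' t 1)) s)
      - (deriv (fun σ' => T σ' t 2) s * deriv (fun σ' => T σ' t 2) s + T s t 2 * deriv (deriv (fun σ' => T σ' t 2)) s) = 0 := by
    have hconst : (fun σ => T σ t 0 * deriv (fun σ' => T σ' t 0) σ + T σ t 1 * deriv (fun σ' => T σ' t 1) σ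
        - T σ t 2 * deriv (fun σ' => T σ' t 2) σ) = fun _ => (0 : ℝ) := funext hg1
    have hd1 : HasDerivAt (fun σ => T σ t 0 * deriv (fun σ' => T σ' t 0) σ + T σ t 1 * deriv (fun σ' => T σ' t 1) σ
        - T σ t 2 * deriv (fun σ' => T σ' t 2) σ)
        ((deriv (fun σ' => T σ' t 0) s * deriv (fun σ' => T σ' t 0) s + T s t 0 * deriv (deriv (fun σ' => T σ' t 0)) s)
          + (deriv (fun σ' => T σ' t 1) s * deriv (fun σ' => T σ' t 1) s + T s t 1 * deriv (deriv (fun σ' => T σ' t 1)) s)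
          - (deriv (fun σ' => T σ' t 2) s * deriv (fun σ' => T σ' t 2) s + T s t 2 * deriv (deriv (fun σ' => T σ' t 2)) s)) s :=
      (((hder 0 s).mul (hder2 0 s)).add ((hder 1 s).mul (hder2 1 s))).sub ((hder 2 s).mul (hder2 2 s))
    have h1 := hd1.deriv
    rw [hconst] at h1
    simp at h1
    linarith
  -- norm computations
  have hnsq : ‖stereo T s t‖ ^ 2 = ((T s t 0) ^ 2 + (T s t 1) ^ 2) / ((1 + T s t 2) ^ 2) := by
    rw [show stereo T s t = ((Complex.ofReal (T s t 0)) + Complex.I * (Complex.ofReal (T s t 1))) / (1 + (Complex.ofReal (T s t 2))) from rfl]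
    rw [norm_div, div_pow, Complex.sq_norm, Complex.sq_norm]
    congr 1
    · simp [Complex.normSq_apply]; ring
    · rw [show (1 + (Complex.ofReal (T s t 2))) = Complex.ofReal (1 + T s t 2) by push_cast; ring]
      simp [Complex.normSq_apply]
      ring
  have hpos : (0:ℝ) < 1 + T s t 2 := by linarith
  have hlt : ‖stereo T s t‖ < 1 := by
    have h1 : ‖stereo T s t‖ ^ 2 < 1 := by
      rw [hnsq, div_lt_one (by positivity)]
      nlinarith [hhyp s t ht]
    nlinarith [norm_nonneg (stereo T s t)]
  refine ⟨hlt, ?_⟩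
  have hnval : ‖stereo T s t‖ ^ 2 = (T s t 2 - 1) / (T s t 2 + 1) := by
    rw [hnsq, div_eq_div_iff (by positivity) (by positivity)]
    linear_combination (T s t 2 + 1) * hhyp s t ht
  have hconj : (starRingEnd ℂ) (stereo T s t)
      = ((Complex.ofReal (T s t 0)) - Complex.I * (Complex.ofReal (T s t 1))) / (1 + (Complex.ofReal (T s t 2))) := by
    rw [show stereo T s t = ((Complex.ofReal (T s t 0)) + Complex.I * (Complex.ofReal (T s t 1))) / (1 + (Complex.ofReal (T s t 2))) from rfl, map_div₀]
    simp [map_add, map_mul, map_one, Complex.conj_ofReal, Complex.conj_I]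
    ring
  have hss : deriv (deriv (fun σ => stereo T σ t)) s = ((((((Complex.ofReal (deriv (deriv (fun σ' => T σ' t 0)) s)) + Complex.I * (Complex.ofReal (deriv (deriv (fun σ' => T σ' t 1)) s))) * (1 + (Complex.ofReal (T s t 2))) + ((Complex.ofReal (deriv (fun σ' => T σ' t 0) s)) + Complex.I * (Complex.ofReal (deriv (fun σ' => T σ' t 1) s))) * (Complex.ofReal (deriv (fun σ' => T σ' t 2) s))) - (((Complex.ofReal (deriv (fun σ' => T σ' t 0) s)) + Complex.I * (Complex.ofReal (deriv (fun σ' => T σ' t 1) s))) * (Complex.ofReal (deriv (fun σ' => T σ' t 2) s)) + ((Complex.ofReal (T s t 0)) + Complex.I * (Complex.ofReal (T s t 1))) * (Complex.ofReal (deriv (deriv (fun σ' => T σ' t 2)) s)))) * ((1 + (Complex.ofReal (T s t 2))) ^ 2) - (((Complex.ofReal (deriv (fun σ' => T σ' t 0) s)) + Complex.I * (Complex.ofReal (deriv (fun σ' => T σ' t 1) s))) * (1 + (Complex.ofReal (T s t 2))) - ((Complex.ofReal (T s t 0)) + Complex.I * (Complex.ofReal (T s t 1))) * (Complex.ofReal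 (deriv (fun σ' => T σ' t 2) s))) * ((Complex.ofReal (deriv (fun σ' => T σ' t 2) s)) * (1 + (Complex.ofReal (T s t 2))) + (1 + (Complex.ofReal (T s t 2))) * (Complex.ofReal (deriv (fun σ' => T σ' t 2) s)))) / ((1 + (Complex.ofReal (T s t 2))) ^ 2) ^ 2) := by
    rw [hds1]; exact hzss.deriv
  have hzs_s : deriv (fun σ => stereo T σ t) s = ((((Complex.ofReal (deriv (fun σ' => T σ' t 0) s)) + Complex.I * (Complex.ofReal (deriv (fun σ' => T σ' t 1) s))) * (1 + (Complex.ofReal (T s t 2))) - ((Complex.ofReal (T s t 0)) + Complex.I * (Complex.ofReal (T s t 1))) * (Complex.ofReal (deriv (fun σ' => T σ' t 2) s))) / (1 + (Complex.ofReal (T s t 2))) ^ 2) := (hzs s).deriv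
  rw [hzt.deriv, hss, hzs_s, hAt, hBt, hCt, hconj, hnval]
  have hc0ne : (Complex.ofReal (T s t 2)) ≠ 0 := Complex.ofReal_ne_zero.mpr (ne_of_gt hc0pos)
  have h0c : (Complex.ofReal (T s t 0)) ^ 2 + (Complex.ofReal (T s t 1)) ^ 2 - (Complex.ofReal (T s t 2)) ^ 2 = -1 := by
    exact_mod_cast hhyp s t ht
  have h1c : (Complex.ofReal (T s t 0)) * (Complex.ofReal (deriv (fun σ' => T σ' t 0) s)) + (Complex.ofReal (T s t 1)) * (Complex.ofReal (deriv (fun σ' => T σ' t 1) s))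
      - (Complex.ofReal (T s t 2)) * (Complex.ofReal (deriv (fun σ' => T σ' t 2) s)) = 0 := by exact_mod_cast hg1 s
  have h2c : (Complex.ofReal (deriv (fun σ' => T σ' t 0) s)) * (Complex.ofReal (deriv (fun σ' => T σ' t 0) s)) + (Complex.ofReal (T s t 0)) * (Complex.ofReal (deriv (deriv (fun σ' => T σ' t 0)) s))
      + ((Complex.ofReal (deriv (fun σ' => T σ' t 1) s)) * (Complex.ofReal (deriv (fun σ' => T σ' t 1) s)) + (Complex.ofReal (T s t 1)) * (Complex.ofReal (deriv (deriv (fun σ' => T σ' t 1)) s)))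
      - ((Complex.ofReal (deriv (fun σ' => T σ' t 2) s)) * (Complex.ofReal (deriv (fun σ' => T σ' t 2) s)) + (Complex.ofReal (T s t 2)) * (Complex.ofReal (deriv (deriv (fun σ' => T σ' t 2)) s))) = 0 := by
    exact_mod_cast hg2
  have hk := key (Complex.ofReal (T s t 0)) (Complex.ofReal (T s t 1)) (Complex.ofReal (T s t 2))
    (Complex.ofReal (deriv (fun σ' => T σ' t 0) s)) (Complex.ofReal (deriv (fun σ' => T σ' t 1) s)) (Complex.ofReal (deriv (fun σ' => T σ' t 2) s))
    (Complex.ofReal (deriv (deriv (fun σ' => T σ' t 0)) s)) (Complex.ofReal (deriv (deriv (fun σ' => T σ' t 1)) s)) (Complex.ofReal (deriv (deriv (fun σ' => T σ' t 2)) s))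
    (hdne s) hc0ne h0c h1c h2c
  push_cast
  linear_combination hk
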